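/- arXiv:1202.0391 — 2 statements merged into one kernel-verified Lean document; each statement's English description precedes it below -/
import Mathlib

section
/- If Z_m has a chi-squared distribution with m degrees of freedom (m a positive integer), then for all κ > 0, P(Z_m - m ≥ κ m) ≤ exp(-(m/2)(κ - log(1+κ))). -/
/-!
Chernoff bound. For `X ~ N(0, 1)` one has `E[exp (t X²)] = (1 - 2t)^(-1/2)`, so by independence
`E[exp (t Z_m)] = (1 - 2t)^(-m/2)`, and Markov's inequality applied to `exp (t Z_m)` gives
`P(Z_m ≥ (1 + κ) m) ≤ exp (-t (1 + κ) m) (1 - 2t)^(-m/2)` for `0 ≤ t < 1/2`.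
The minimising choice `t = κ / (2 (1 + κ))` makes `1 - 2t = (1 + κ)⁻¹` and yields the bound.
-/

open MeasureTheory ProbabilityTheory Real
open scoped NNReal

/-- For `2 t v ≥ 1` both sides are `0`: the integrand is not integrable, and `√` of a
nonpositive number is `0`. -/
theorem integral_exp_mul_sq_gaussianReal {v : ℝ≥0} (hv : v ≠ 0) (t : ℝ) :
    ∫ x, rexp (t * x ^ 2) ∂gaussianReal 0 v = (√(1 - 2 * t * v))⁻¹ := by
  have hv' : (0 : ℝ) < v := by positivity
  have hpdf (x : ℝ) : gaussianPDFReal 0 v x • rexp (t * x ^ 2)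
      = (√(2 * π * v))⁻¹ * rexp (-((1 - 2 * t * v) / (2 * v)) * x ^ 2) := by
    rw [gaussianPDFReal, smul_eq_mul, mul_assoc, ← exp_add]
    congr 2
    field_simp
    ring
  rw [integral_gaussianReal_eq_integral_smul hv]
  simp_rw [hpdf]
  rw [integral_const_mul, integral_gaussian, div_div_eq_mul_div, mul_left_comm, ← mul_assoc,
    sqrt_div (by positivity)]
  field_simp

section

variable {Ω : Type*} [MeasurableSpace Ω] {μ : Measure Ω} {v : ℝ≥0}

theorem mgf_sq_of_hasLaw_gaussianReal {X : Ω → ℝ} (hv : v ≠ 0)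
    (hX : HasLaw X (gaussianReal 0 v) μ) (t : ℝ) :
    mgf (fun ω ↦ X ω ^ 2) μ t = (√(1 - 2 * t * v))⁻¹ := by
  rw [← integral_exp_mul_sq_gaussianReal hv, ← hX.integral_comp (by fun_prop)]
  rfl

theorem mgf_sum_sq_of_iIndepFun_gaussianReal {ι : Type*} {X : ι → Ω → ℝ} (hv : v ≠ 0)
    (hindep : iIndepFun X μ) (hX : ∀ i, HasLaw (X i) (gaussianReal 0 v) μ)
    (s : Finset ι) (t : ℝ) :
    mgf (∑ i ∈ s, fun ω ↦ X i ω ^ 2) μ t = (√(1 - 2 * t * v))⁻¹ ^ s.card := by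
  have hsq : iIndepFun (fun i ω ↦ X i ω ^ 2) μ :=
    hindep.comp (fun _ x ↦ x ^ 2) fun _ ↦ by fun_prop
  rw [hsq.mgf_sum₀ (fun i ↦ (hX i).aemeasurable.pow_const 2),
    Finset.prod_congr rfl fun i _ ↦ mgf_sq_of_hasLaw_gaussianReal hv (hX i) t,
    Finset.prod_const]

theorem measureReal_sum_sq_ge_le [IsProbabilityMeasure μ] {ι : Type*} {X : ι → Ω → ℝ}
    (hv : v ≠ 0) (hindep : iIndepFun X μ) (hX : ∀ i, HasLaw (X i) (gaussianReal 0 v) μ)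
    (s : Finset ι) {t : ℝ} (ht₀ : 0 ≤ t) (ht : 2 * t * v < 1) (a : ℝ) :
    μ.real {ω | a ≤ ∑ i ∈ s, X i ω ^ 2} ≤ rexp (-t * a) * (√(1 - 2 * t * v))⁻¹ ^ s.card := by
  have hmgf := mgf_sum_sq_of_iIndepFun_gaussianReal hv hindep hX s t
  have hint : Integrable (fun ω ↦ rexp (t * (∑ i ∈ s, fun ω ↦ X i ω ^ 2) ω)) μ := by
    refine .of_integral_ne_zero ?_
    change mgf _ μ t ≠ 0
    have : 0 < 1 - 2 * t * v := by linarith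
    rw [hmgf]
    positivity
  simpa only [Finset.sum_apply, hmgf] using measure_ge_le_exp_mul_mgf a ht₀ hint

theorem measureReal_sum_sq_ge_one_add_mul_card_le [IsProbabilityMeasure μ] {ι : Type*}
    {X : ι → Ω → ℝ} (hindep : iIndepFun X μ) (hX : ∀ i, HasLaw (X i) (gaussianReal 0 1) μ)
    (s : Finset ι) {κ : ℝ} (hκ : 0 ≤ κ) :
    μ.real {ω | (1 + κ) * s.card ≤ ∑ i ∈ s, X i ω ^ 2}
      ≤ rexp (-(s.card / 2) * (κ - log (1 + κ))) := by
  have hκ₁ : 0 < 1 + κ := by linarith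
  have ht : 2 * (κ / (2 * (1 + κ))) * ((1 : ℝ≥0) : ℝ) = κ / (1 + κ) := by
    rw [NNReal.coe_one, mul_one, ← mul_div_assoc, mul_div_mul_left _ _ two_ne_zero]
  have ht₁ : 2 * (κ / (2 * (1 + κ))) * ((1 : ℝ≥0) : ℝ) < 1 := by
    rw [ht, div_lt_one hκ₁]
    linarith
  have hsub : 1 - κ / (1 + κ) = (1 + κ)⁻¹ := by
    field_simp
    ring
  have hsqrt : √(1 + κ) = rexp (log (1 + κ) / 2) := by
    rw [sqrt_eq_rpow, rpow_def_of_pos hκ₁]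
    ring_nf
  refine (measureReal_sum_sq_ge_le one_ne_zero hindep hX s (by positivity) ht₁ _).trans_eq ?_
  rw [ht, hsub, sqrt_inv, inv_inv, hsqrt, ← exp_nat_mul, ← exp_add]
  congr 1
  field_simp
  ring

end

theorem chiSq_upper_tail_general {Ω : Type*} [MeasurableSpace Ω] (μ : Measure Ω) [IsProbabilityMeasure μ]
    (m : ℕ) (X : Fin m → Ω → ℝ)
    (hindep : iIndepFun X μ)
    (hlaw : ∀ i, μ.map (X i) = gaussianReal 0 1)
    (κ : ℝ) (hκ : 0 < κ) :
    μ {ω | (∑ i, (X i ω) ^ 2) - m ≥ κ * m} ≤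
      ENNReal.ofReal (Real.exp (-(m / 2) * (κ - Real.log (1 + κ)))) := by
  have hX (i : Fin m) : HasLaw (X i) (gaussianReal 0 1) μ :=
    ⟨aemeasurable_of_map_neZero (by rw [hlaw i]; infer_instance), hlaw i⟩
  have hset : {ω | (∑ i, (X i ω) ^ 2) - m ≥ κ * m} = {ω | (1 + κ) * m ≤ ∑ i, X i ω ^ 2} := by
    ext ω
    simp only [Set.mem_ofPred_eq, ge_iff_le]
    constructor <;> intro h <;> linarith
  have hbound := measureReal_sum_sq_ge_one_add_mul_card_le hindep hX Finset.univ hκ.le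
  rw [Finset.card_univ, Fintype.card_fin] at hbound
  rw [hset, ← ofReal_measureReal]
  exact ENNReal.ofReal_le_ofReal hbound

/-- Chi-squared upper tail bound for the sum of squares of `m` i.i.d. standard normals. -/
theorem chiSq_upper_tail {Ω : Type*} [MeasurableSpace Ω] (μ : Measure Ω) [IsProbabilityMeasure μ]
    (m : ℕ) (hm : 0 < m) (X : Fin m → Ω → ℝ) (hmeas : ∀ i, Measurable (X i))
    (hindep : iIndepFun X μ)
    (hlaw : ∀ i, μ.map (X i) = gaussianReal 0 1)
    (κ : ℝ) (hκ : 0 < κ) :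
    μ {ω | (∑ i, (X i ω) ^ 2) - m ≥ κ * m} ≤
      ENNReal.ofReal (Real.exp (-(m / 2) * (κ - Real.log (1 + κ)))) :=
  chiSq_upper_tail_general μ m X hindep hlaw κ hκ
end

section
/- If Z_m has a chi-squared distribution with m degrees of freedom (m a positive integer), then for all 0 < κ < 1, P(Z_m - m ≤ -κ m) ≤ exp(-(m/2)(-κ - log(1-κ))). -/
/-!
Chernoff's bound. For `t < 1/2` the moment generating function of `x ↦ x²` under the standard
Gaussian is `(1 - 2t)^(-1/2)`, so by independence `E[exp (t Z_m)] = (1 - 2t)^(-m/2)`. Markov's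
inequality applied to `exp (t Z_m)` with `t = -κ / (2(1 - κ)) ≤ 0`, the minimiser of the resulting
exponent, gives exactly the stated bound.
-/

open MeasureTheory ProbabilityTheory Real

/-- For `t ≥ 1 / 2` both sides are the junk value `0`. -/
lemma mgf_sq_gaussianReal (t : ℝ) :
    mgf (fun x => x ^ 2) (gaussianReal 0 1) t = (√(1 - 2 * t))⁻¹ := by
  have hdensity : ∀ x : ℝ, gaussianPDFReal 0 1 x • exp (t * x ^ 2)
      = (√(2 * π))⁻¹ * exp (-(1 / 2 - t) * x ^ 2) := by
    intro x
    simp only [gaussianPDFReal, NNReal.coe_one, mul_one, sub_zero, smul_eq_mul]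
    rw [mul_assoc, ← exp_add]
    congr 2
    ring
  rw [mgf, integral_gaussianReal_eq_integral_smul one_ne_zero]
  simp_rw [hdensity]
  rw [integral_const_mul, integral_gaussian,
    show π / (1 / 2 - t) = 2 * π * (1 - 2 * t)⁻¹ by field_simp,
    sqrt_mul (by positivity : (0 : ℝ) ≤ 2 * π), sqrt_inv, ← mul_assoc,
    inv_mul_cancel₀ (by positivity), one_mul]

section

variable {Ω : Type*} [MeasurableSpace Ω] {μ : Measure Ω} {t : ℝ}

lemma mgf_sq_of_map_eq_gaussianReal {X : Ω → ℝ} (hX : Measurable X)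
    (hlaw : μ.map X = gaussianReal 0 1) :
    mgf (fun ω => X ω ^ 2) μ t = (√(1 - 2 * t))⁻¹ := by
  rw [← mgf_sq_gaussianReal t, ← hlaw, mgf_map hX.aemeasurable (by fun_prop)]
  rfl

lemma mgf_sum_sq_of_iIndepFun {ι : Type*} [Fintype ι] {X : ι → Ω → ℝ}
    (hmeas : ∀ i, Measurable (X i)) (hindep : iIndepFun X μ)
    (hlaw : ∀ i, μ.map (X i) = gaussianReal 0 1) :
    mgf (fun ω => ∑ i, X i ω ^ 2) μ t = (√(1 - 2 * t))⁻¹ ^ Fintype.card ι := by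
  have hsq : iIndepFun (fun i ω => X i ω ^ 2) μ :=
    hindep.comp (fun _ x => x ^ 2) fun _ => by fun_prop
  rw [← Finset.sum_fn, hsq.mgf_sum (fun i => by fun_prop),
    Finset.prod_congr rfl fun i _ => mgf_sq_of_map_eq_gaussianReal (hmeas i) (hlaw i),
    Finset.prod_const, Finset.card_univ]

lemma measureReal_sum_sq_le_le {ι : Type*} [Fintype ι] {X : ι → Ω → ℝ}
    (hmeas : ∀ i, Measurable (X i)) (hindep : iIndepFun X μ)
    (hlaw : ∀ i, μ.map (X i) = gaussianReal 0 1) (ht : t ≤ 0) (ε : ℝ) :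
    μ.real {ω | ∑ i, X i ω ^ 2 ≤ ε} ≤ exp (-t * ε) * (√(1 - 2 * t))⁻¹ ^ Fintype.card ι := by
  have := hindep.isProbabilityMeasure
  have hmgf := mgf_sum_sq_of_iIndepFun hmeas hindep hlaw (t := t)
  have hint : Integrable (fun ω => exp (t * ∑ i, X i ω ^ 2)) μ := by
    rw [← mgf_pos_iff, hmgf]
    have : 0 < 1 - 2 * t := by linarith
    positivity
  simpa only [hmgf] using measure_le_le_exp_mul_mgf ε ht hint

end

lemma exp_mul_sqrt_pow_eq {κ : ℝ} (hκ : κ < 1) (m : ℕ) :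
    exp (κ * m / 2) * √(1 - κ) ^ m = exp (-(m / 2) * (-κ - log (1 - κ))) := by
  have h1κ : 0 < 1 - κ := by linarith
  rw [← exp_log (sqrt_pos.mpr h1κ), log_sqrt h1κ.le, ← exp_nat_mul, ← exp_add]
  ring_nf

theorem chiSq_lower_tail_general {Ω : Type*} [MeasurableSpace Ω] (μ : Measure Ω) [IsProbabilityMeasure μ]
    (m : ℕ) (X : Fin m → Ω → ℝ) (hmeas : ∀ i, Measurable (X i))
    (hindep : iIndepFun X μ)
    (hlaw : ∀ i, μ.map (X i) = gaussianReal 0 1)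
    (κ : ℝ) (hκ0 : 0 < κ) (hκ1 : κ < 1) :
    μ {ω | (∑ i, (X i ω) ^ 2) - m ≤ -κ * m} ≤
      ENNReal.ofReal (Real.exp (-(m / 2) * (-κ - Real.log (1 - κ)))) := by
  have h1κ : 0 < 1 - κ := by linarith
  set t := -(κ / (2 * (1 - κ))) with ht_def
  have ht : t ≤ 0 := neg_nonpos.mpr (by positivity)
  have hset : {ω | (∑ i, (X i ω) ^ 2) - m ≤ -κ * m} = {ω | ∑ i, X i ω ^ 2 ≤ (1 - κ) * m} := by
    ext ω
    simp only [Set.mem_ofPred_eq]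
    constructor <;> intro h <;> linarith
  have hrhs : exp (-t * ((1 - κ) * m)) * (√(1 - 2 * t))⁻¹ ^ Fintype.card (Fin m)
      = exp (κ * m / 2) * √(1 - κ) ^ m := by
    rw [show 1 - 2 * t = (1 - κ)⁻¹ by rw [ht_def]; field_simp; ring, sqrt_inv, inv_inv,
      Fintype.card_fin]
    congr 2
    rw [ht_def]
    field_simp
  rw [hset, ← ofReal_measureReal]
  exact ENNReal.ofReal_le_ofReal <| (measureReal_sum_sq_le_le hmeas hindep hlaw ht _).trans_eq <|
    hrhs.trans (exp_mul_sqrt_pow_eq hκ1 m)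

/-- Chi-squared lower tail bound for the sum of squares of `m` i.i.d. standard normals. -/
theorem chiSq_lower_tail {Ω : Type*} [MeasurableSpace Ω] (μ : Measure Ω) [IsProbabilityMeasure μ]
    (m : ℕ) (hm : 0 < m) (X : Fin m → Ω → ℝ) (hmeas : ∀ i, Measurable (X i))
    (hindep : iIndepFun X μ)
    (hlaw : ∀ i, μ.map (X i) = gaussianReal 0 1)
    (κ : ℝ) (hκ0 : 0 < κ) (hκ1 : κ < 1) :
    μ {ω | (∑ i, (X i ω) ^ 2) - m ≤ -κ * m} ≤
      ENNReal.ofReal (Real.exp (-(m / 2) * (-κ - Real.log (1 - κ)))) :=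
  chiSq_lower_tail_general μ m X hmeas hindep hlaw κ hκ0 hκ1
end
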